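/- arXiv:math/0501274 — 4 statements merged into one kernel-verified Lean document; each statement's English description precedes it below -/
import Mathlib

section
/- Let 0 < c < 1. Let (Fₙ) be a sequence of c-defective distribution functions, and let G and G* be nondegenerate c-defective distribution functions. Suppose aₙ > 0, bₙ ∈ ℝ, αₙ > 0, βₙ ∈ ℝ are such that Fₙ(aₙ·x + bₙ) → G(x) as n → ∞ at every continuity point x of G, and Fₙ(αₙ·x + βₙ) → G*(x) as n → ∞ at every continuity point x of G*. Then there exist a > 0 and b ∈ ℝ such that αₙ/aₙ → a, (βₙ − bₙ)/aₙ → b, and G*(x) = G(a·x + b) for all x ∈ ℝ. -/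
/-!
Put `H n y = F n (a n * y + b n)`, `u n = α n / a n` and `v n = (β n - b n) / a n`, so that
`H n → G` and `H n (u n * · + v n) → Gs` at continuity points. Comparing `H n (u n * t + v n)`
with `H n` at continuity points of `G` where `G` lies below or above the level `Gs t ∈ (c, 1)`
bounds `u n * t + v n`; doing this at two points bounds `u n` from above, and the same argument
with the roles of `G` and `Gs` exchanged bounds it away from `0`. Hence `(u n, v n)` stays in a
compact subset of `(0, ∞) × ℝ`. Along a subsequence converging to `(A, B)`, monotonicity and
right continuity give `Gs = G (A * · + B)`; as a nondegenerate `G` has distinct quantiles at two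
levels, this relation determines `(A, B)`, so the whole sequence converges.
-/

open Filter Topology

/-- A `c`-defective distribution function: nondecreasing, right continuous,
tending to `1` at `+∞` and to `c` at `-∞`. -/
def IsDefectiveDF (c : ℝ) (H : ℝ → ℝ) : Prop :=
  Monotone H ∧ (∀ x, ContinuousWithinAt H (Set.Ici x) x) ∧
    Tendsto H atTop (𝓝 1) ∧ Tendsto H atBot (𝓝 c)

open Set

lemma Monotone.exists_continuousAt_mem_Ioo {f : ℝ → ℝ} (hf : Monotone f) {s t : ℝ} (h : s < t) :
    ∃ z ∈ Ioo s t, ContinuousAt f z := by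
  obtain ⟨z, hz, hzst⟩ := (hf.countable_not_continuousAt.dense_compl ℝ).exists_between h
  exact ⟨z, hzst, not_not.mp hz⟩

lemma Monotone.exists_continuousAt_lt_of_tendsto_atTop {f : ℝ → ℝ} (hf : Monotone f) {l p : ℝ}
    (hl : Tendsto f atTop (𝓝 l)) (hp : p < l) : ∃ z, ContinuousAt f z ∧ p < f z := by
  obtain ⟨y, hy⟩ := (hl.eventually_const_lt hp).exists
  obtain ⟨z, hz, hzc⟩ := hf.exists_continuousAt_mem_Ioo (lt_add_one y)
  exact ⟨z, hzc, hy.trans_le (hf hz.1.le)⟩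

lemma Monotone.exists_continuousAt_gt_of_tendsto_atBot {f : ℝ → ℝ} (hf : Monotone f) {l p : ℝ}
    (hl : Tendsto f atBot (𝓝 l)) (hp : l < p) : ∃ z, ContinuousAt f z ∧ f z < p := by
  obtain ⟨y, hy⟩ := (hl.eventually_lt_const hp).exists
  obtain ⟨z, hz, hzc⟩ := hf.exists_continuousAt_mem_Ioo (sub_one_lt y)
  exact ⟨z, hzc, (hf hz.2.le).trans_lt hy⟩

lemma ContinuousWithinAt.le_apply_of_forall_gt {f : ℝ → ℝ} {x r : ℝ}
    (hf : ContinuousWithinAt f (Ici x) x) (h : ∀ z, x < z → r ≤ f z) : r ≤ f x :=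
  ge_of_tendsto (hf.mono Ioi_subset_Ici_self) (eventually_nhdsWithin_of_forall h)

lemma Monotone.exists_le_apply_iff {f : ℝ → ℝ} (hf : Monotone f)
    (hrc : ∀ x, ContinuousWithinAt f (Ici x) x) {p : ℝ} (hlo : ∃ y, f y < p)
    (hhi : ∃ y, p ≤ f y) : ∃ s, ∀ y, p ≤ f y ↔ s ≤ y := by
  obtain ⟨y₀, hy₀⟩ := hlo
  have hbdd : BddBelow {y | p ≤ f y} :=
    ⟨y₀, fun y hy => le_of_not_gt fun hlt => (hy.trans (hf hlt.le)).not_gt hy₀⟩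
  refine ⟨sInf {y | p ≤ f y}, fun y => ⟨fun hy => csInf_le hbdd hy, fun hy => ?_⟩⟩
  refine le_trans ((hrc _).le_apply_of_forall_gt fun z hz => ?_) (hf hy)
  obtain ⟨w, hw, hwz⟩ := exists_lt_of_csInf_lt hhi hz
  exact le_trans hw (hf hwz.le)

namespace IsDefectiveDF

variable {c : ℝ} {G : ℝ → ℝ}

lemma exists_continuousAt_lt_lt (hG : IsDefectiveDF c G) (hnd : ∃ x, c < G x ∧ G x < 1) :
    ∃ t₁ t₂, t₁ < t₂ ∧ ContinuousAt G t₁ ∧ ContinuousAt G t₂ ∧ c < G t₁ ∧ G t₂ < 1 := by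
  obtain ⟨x, hcx, hx1⟩ := hnd
  obtain ⟨d, hxd, hd⟩ := mem_nhdsGE_iff_exists_Ico_subset.mp (hG.2.1 x (Iio_mem_nhds hx1))
  obtain ⟨t₁, ht₁, hc₁⟩ := hG.1.exists_continuousAt_mem_Ioo hxd
  obtain ⟨t₂, ht₂, hc₂⟩ := hG.1.exists_continuousAt_mem_Ioo ht₁.2
  exact ⟨t₁, t₂, ht₂.1, hc₁, hc₂, hcx.trans_le (hG.1 ht₁.1.le),
    hd ⟨(ht₁.1.trans ht₂.1).le, ht₂.2⟩⟩

lemma affine_unique (hG : IsDefectiveDF c G) (hnd : ∃ x, c < G x ∧ G x < 1) {A B A' B' : ℝ}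
    (hA : 0 < A) (hA' : 0 < A') (h : ∀ x, G (A * x + B) = G (A' * x + B')) :
    A = A' ∧ B = B' := by
  -- if `s` is the `p`-quantile of `G`, then `(s - B) / A` is the `p`-quantile of `G (A * · + B)`
  have quantile_eq : ∀ p s, (∀ y, p ≤ G y ↔ s ≤ y) → (s - B) * A' = (s - B') * A := by
    intro p s hs
    have threshold_iff : ∀ x, (s - B) / A ≤ x ↔ (s - B') / A' ≤ x := fun x => by
      rw [div_le_iff₀ hA, div_le_iff₀ hA', sub_le_iff_le_add, sub_le_iff_le_add, mul_comm x,
        mul_comm x, ← hs, ← hs, h]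
    have := le_antisymm ((threshold_iff _).2 le_rfl) ((threshold_iff _).1 le_rfl)
    field_simp at this
    linarith
  obtain ⟨x₀, hcx, hx1⟩ := hnd
  obtain ⟨p, hp, hp1⟩ := exists_between hx1
  have hlo : ∃ y, G y < G x₀ := (hG.2.2.2.eventually_lt_const hcx).exists
  obtain ⟨s₁, hs₁⟩ := hG.1.exists_le_apply_iff hG.2.1 hlo ⟨x₀, le_rfl⟩
  obtain ⟨s₂, hs₂⟩ := hG.1.exists_le_apply_iff hG.2.1 (hlo.imp fun _ hy => hy.trans hp)
    ((hG.2.2.1.eventually_const_lt hp1).exists.imp fun _ hy => hy.le)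
  have hs : s₁ < s₂ :=
    lt_of_not_ge fun h21 => hp.not_ge ((hs₂ x₀).2 (h21.trans ((hs₁ x₀).1 le_rfl)))
  have e₁ := quantile_eq _ _ hs₁
  have e₂ := quantile_eq _ _ hs₂
  have hAA : A = A' := mul_left_cancel₀ (sub_ne_zero.2 hs.ne') (by linear_combination e₁ - e₂)
  subst hAA
  exact ⟨rfl, mul_right_cancel₀ hA.ne' (by linear_combination -e₁)⟩

end IsDefectiveDF

def TendstoAtContinuityPoints (H : ℕ → ℝ → ℝ) (G : ℝ → ℝ) : Prop :=
  ∀ x, ContinuousAt G x → Tendsto (fun n => H n x) atTop (𝓝 (G x))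

lemma eventually_lt_of_tendsto_of_monotone {ι : Type*} {l : Filter ι} {H : ι → ℝ → ℝ}
    (hH : ∀ i, Monotone (H i)) {x y : ι → ℝ} {L L' : ℝ}
    (hx : Tendsto (fun i => H i (x i)) l (𝓝 L)) (hy : Tendsto (fun i => H i (y i)) l (𝓝 L'))
    (h : L < L') : ∀ᶠ i in l, x i < y i :=
  (hx.eventually_lt hy h).mono fun i hi => (hH i).reflect_lt hi

namespace TendstoAtContinuityPoints

variable {H : ℕ → ℝ → ℝ} {G Gs : ℝ → ℝ} {u v : ℕ → ℝ}

lemma comp_tendsto (h : TendstoAtContinuityPoints H G) {φ : ℕ → ℕ}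
    (hφ : Tendsto φ atTop atTop) : TendstoAtContinuityPoints (fun n => H (φ n)) G :=
  fun x hx => (h x hx).comp hφ

lemma affine_symm (hu : ∀ n, u n ≠ 0) (h : TendstoAtContinuityPoints H G) :
    TendstoAtContinuityPoints
      (fun n y => H n (u n * ((u n)⁻¹ * y + -(v n / u n)) + v n)) G := by
  have hH : (fun n y => H n (u n * ((u n)⁻¹ * y + -(v n / u n)) + v n)) = H := by
    funext n y
    congr 1
    field_simp [hu n]
    ring
  rwa [hH]

lemma exists_eventually_mem_Icc (hH : ∀ n, Monotone (H n)) (h : TendstoAtContinuityPoints H G)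
    (hG : Monotone G) {l₁ l₂ : ℝ} (hbot : Tendsto G atBot (𝓝 l₁))
    (htop : Tendsto G atTop (𝓝 l₂)) {x : ℕ → ℝ} {L : ℝ}
    (hx : Tendsto (fun n => H n (x n)) atTop (𝓝 L)) (hL : L ∈ Ioo l₁ l₂) :
    ∃ m M, ∀ᶠ n in atTop, x n ∈ Icc m M := by
  obtain ⟨m, hmc, hm⟩ := hG.exists_continuousAt_gt_of_tendsto_atBot hbot hL.1
  obtain ⟨M, hMc, hM⟩ := hG.exists_continuousAt_lt_of_tendsto_atTop htop hL.2
  refine ⟨m, M, ?_⟩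
  filter_upwards [eventually_lt_of_tendsto_of_monotone (y := x) hH (h m hmc) hx hm,
    eventually_lt_of_tendsto_of_monotone (x := x) hH hx (h M hMc) hM] with n hmn hMn
  exact ⟨hmn.le, hMn.le⟩

end TendstoAtContinuityPoints

section ConvergenceOfTypes

variable {c : ℝ} {G Gs : ℝ → ℝ} {H : ℕ → ℝ → ℝ} {u v : ℕ → ℝ}

lemma monotone_comp_affine (hH : ∀ n, Monotone (H n)) (hu : ∀ n, 0 < u n) (n : ℕ) :
    Monotone fun y => H n (u n * y + v n) :=
  (hH n).comp ((monotone_id.const_mul (hu n).le).add_const (v n))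

lemma exists_eventually_le_of_tendstoAtContinuityPoints (hG : IsDefectiveDF c G)
    (hGs : IsDefectiveDF c Gs) (hGsnd : ∃ x, c < Gs x ∧ Gs x < 1) (hH : ∀ n, Monotone (H n))
    (h₁ : TendstoAtContinuityPoints H G)
    (h₂ : TendstoAtContinuityPoints (fun n y => H n (u n * y + v n)) Gs) :
    ∃ K, ∀ᶠ n in atTop, u n ≤ K := by
  obtain ⟨t₁, t₂, ht, hc₁, hc₂, hct₁, ht₂⟩ := hGs.exists_continuousAt_lt_lt hGsnd
  have hGst : Gs t₁ ≤ Gs t₂ := hGs.1 ht.le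
  obtain ⟨m₁, _, hb₁⟩ := h₁.exists_eventually_mem_Icc hH hG.1 hG.2.2.2 hG.2.2.1 (h₂ t₁ hc₁)
    ⟨hct₁, hGst.trans_lt ht₂⟩
  obtain ⟨_, M₂, hb₂⟩ := h₁.exists_eventually_mem_Icc hH hG.1 hG.2.2.2 hG.2.2.1 (h₂ t₂ hc₂)
    ⟨hct₁.trans_le hGst, ht₂⟩
  refine ⟨(M₂ - m₁) / (t₂ - t₁), ?_⟩
  filter_upwards [hb₁, hb₂] with n hn₁ hn₂
  rw [le_div_iff₀ (sub_pos.2 ht)]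
  linarith [hn₁.1, hn₂.2]

lemma exists_isCompact_eventually_mem (hG : IsDefectiveDF c G) (hGs : IsDefectiveDF c Gs)
    (hGnd : ∃ x, c < G x ∧ G x < 1) (hGsnd : ∃ x, c < Gs x ∧ Gs x < 1)
    (hH : ∀ n, Monotone (H n)) (hu : ∀ n, 0 < u n) (h₁ : TendstoAtContinuityPoints H G)
    (h₂ : TendstoAtContinuityPoints (fun n y => H n (u n * y + v n)) Gs) :
    ∃ S : Set (ℝ × ℝ), IsCompact S ∧ (∀ q ∈ S, 0 < q.1) ∧ ∀ᶠ n in atTop, (u n, v n) ∈ S := by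
  obtain ⟨K, hK⟩ := exists_eventually_le_of_tendstoAtContinuityPoints hG hGs hGsnd hH h₁ h₂
  -- the lower bound on `u` is the upper bound for the inverse change of variables
  obtain ⟨K', hK'⟩ := exists_eventually_le_of_tendstoAtContinuityPoints hGs hG hGnd
    (monotone_comp_affine hH hu) h₂ (h₁.affine_symm fun n => (hu n).ne')
  obtain ⟨n₀, hn₀⟩ := hK'.exists
  have hK'pos : 0 < K' := (inv_pos.2 (hu n₀)).trans_le hn₀
  obtain ⟨t, t₂, ht, htc, -, hct, ht₂⟩ := hGs.exists_continuousAt_lt_lt hGsnd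
  obtain ⟨m, M, hmM⟩ := h₁.exists_eventually_mem_Icc hH hG.1 hG.2.2.2 hG.2.2.1 (h₂ t htc)
    ⟨hct, (hGs.1 ht.le).trans_lt ht₂⟩
  refine ⟨(fun q => (q.1, q.2 - q.1 * t)) '' (Icc K'⁻¹ K ×ˢ Icc m M),
    (isCompact_Icc.prod isCompact_Icc).image (by fun_prop), ?_, ?_⟩
  · rintro _ ⟨q, hq, rfl⟩
    exact (inv_pos.2 hK'pos).trans_le hq.1.1
  · filter_upwards [hK, hK', hmM] with n hn hn' hnmM
    exact ⟨(u n, u n * t + v n), ⟨⟨inv_le_of_inv_le₀ (hu n) hn', hn⟩, hnmM⟩, by simp⟩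

lemma le_comp_of_tendsto (hG : Monotone G) (hGrc : ∀ x, ContinuousWithinAt G (Ici x) x)
    (hGs : Monotone Gs) (hH : ∀ n, Monotone (H n)) (h₁ : TendstoAtContinuityPoints H G)
    (h₂ : TendstoAtContinuityPoints (fun n y => H n (u n * y + v n)) Gs) {A B : ℝ}
    (hA : Tendsto u atTop (𝓝 A)) (hB : Tendsto v atTop (𝓝 B)) (x : ℝ) :
    Gs x ≤ G (A * x + B) := by
  refine (hGrc _).le_apply_of_forall_gt fun z' hz' => ?_
  obtain ⟨z, hz, hzc⟩ := hG.exists_continuousAt_mem_Ioo hz'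
  have hnear : ∀ᶠ y in 𝓝 x, A * y + B < z :=
    (by fun_prop : Continuous fun y => A * y + B).continuousAt.eventually_lt
      continuousAt_const hz.1
  obtain ⟨y', hxy', hy'⟩ := mem_nhdsGT_iff_exists_Ioo_subset.1 (nhdsWithin_le_nhds hnear)
  obtain ⟨y, hy, hyc⟩ := hGs.exists_continuousAt_mem_Ioo hxy'
  have hlim : Tendsto (fun n => u n * y + v n) atTop (𝓝 (A * y + B)) := (hA.mul_const y).add hB
  calc Gs x ≤ Gs y := hGs hy.1.le
    _ ≤ G z := le_of_tendsto_of_tendsto (h₂ y hyc) (h₁ z hzc)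
        ((hlim.eventually_lt_const (hy' hy)).mono fun n hn => hH n hn.le)
    _ ≤ G z' := hG hz.2.le

lemma eq_comp_of_tendsto (hG : Monotone G) (hGrc : ∀ x, ContinuousWithinAt G (Ici x) x)
    (hGs : Monotone Gs) (hGsrc : ∀ x, ContinuousWithinAt Gs (Ici x) x)
    (hH : ∀ n, Monotone (H n)) (hu : ∀ n, 0 < u n) (h₁ : TendstoAtContinuityPoints H G)
    (h₂ : TendstoAtContinuityPoints (fun n y => H n (u n * y + v n)) Gs) {A B : ℝ}
    (hA : Tendsto u atTop (𝓝 A)) (hA0 : 0 < A) (hB : Tendsto v atTop (𝓝 B)) (x : ℝ) :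
    Gs x = G (A * x + B) := by
  refine le_antisymm (le_comp_of_tendsto hG hGrc hGs hH h₁ h₂ hA hB x) ?_
  have := le_comp_of_tendsto hGs hGsrc hG (monotone_comp_affine hH hu) h₂
    (h₁.affine_symm fun n => (hu n).ne') (hA.inv₀ hA0.ne') (hB.div hA hA0.ne').neg (A * x + B)
  rwa [show A⁻¹ * (A * x + B) + -(B / A) = x by field_simp; ring] at this

theorem IsDefectiveDF.convergence_of_types (hG : IsDefectiveDF c G) (hGs : IsDefectiveDF c Gs)
    (hGnd : ∃ x, c < G x ∧ G x < 1) (hGsnd : ∃ x, c < Gs x ∧ Gs x < 1)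
    (hH : ∀ n, Monotone (H n)) (hu : ∀ n, 0 < u n) (h₁ : TendstoAtContinuityPoints H G)
    (h₂ : TendstoAtContinuityPoints (fun n y => H n (u n * y + v n)) Gs) :
    ∃ A B, 0 < A ∧ Tendsto u atTop (𝓝 A) ∧ Tendsto v atTop (𝓝 B) ∧
      ∀ x, Gs x = G (A * x + B) := by
  obtain ⟨S, hS, hSpos, hmem⟩ := exists_isCompact_eventually_mem hG hGs hGnd hGsnd hH hu h₁ h₂
  have hcluster : ∀ q ∈ S, MapClusterPt q atTop (fun n => (u n, v n)) →
      ∀ x, Gs x = G (q.1 * x + q.2) := by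
    intro q hq hqc
    obtain ⟨φ, hφ, hlim⟩ := hqc.tendsto_subseq
    exact eq_comp_of_tendsto hG.1 hG.2.1 hGs.1 hGs.2.1 (fun n => hH (φ n)) (fun n => hu (φ n))
      (h₁.comp_tendsto hφ.tendsto_atTop) (h₂.comp_tendsto hφ.tendsto_atTop) hlim.fst_nhds
      (hSpos q hq) hlim.snd_nhds
  obtain ⟨⟨A, B⟩, hABS, hAB⟩ := hS.exists_mapClusterPt_of_frequently hmem.frequently
  have hGsAB := hcluster _ hABS hAB
  have hlim : Tendsto (fun n => (u n, v n)) atTop (𝓝 (A, B)) :=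
    hS.tendsto_nhds_of_unique_mapClusterPt hmem fun q hq hqc => by
      obtain ⟨h1, h2⟩ := hG.affine_unique hGnd (hSpos q hq) (hSpos _ hABS)
        fun x => (hcluster q hq hqc x).symm.trans (hGsAB x)
      exact Prod.ext h1 h2
  exact ⟨A, B, hSpos _ hABS, hlim.fst_nhds, hlim.snd_nhds, hGsAB⟩

end ConvergenceOfTypes

theorem khintchine_law_of_types_defective_general
    (c : ℝ)
    (F : ℕ → ℝ → ℝ) (hF : ∀ n, IsDefectiveDF c (F n))
    (G Gs : ℝ → ℝ) (hG : IsDefectiveDF c G) (hGs : IsDefectiveDF c Gs)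
    (hGnd : ∃ x, c < G x ∧ G x < 1) (hGsnd : ∃ x, c < Gs x ∧ Gs x < 1)
    (a b α β : ℕ → ℝ) (ha : ∀ n, 0 < a n) (hα : ∀ n, 0 < α n)
    (h1 : ∀ x : ℝ, ContinuousAt G x →
      Tendsto (fun n => F n (a n * x + b n)) atTop (𝓝 (G x)))
    (h2 : ∀ x : ℝ, ContinuousAt Gs x →
      Tendsto (fun n => F n (α n * x + β n)) atTop (𝓝 (Gs x))) :
    ∃ A B : ℝ, 0 < A ∧
      Tendsto (fun n => α n / a n) atTop (𝓝 A) ∧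
      Tendsto (fun n => (β n - b n) / a n) atTop (𝓝 B) ∧
      ∀ x : ℝ, Gs x = G (A * x + B) := by
  have h₂ : TendstoAtContinuityPoints
      (fun n y => F n (a n * (α n / a n * y + (β n - b n) / a n) + b n)) Gs := by
    intro x hx
    convert h2 x hx using 3 with n
    field_simp [(ha n).ne']
    ring
  exact hG.convergence_of_types hGs hGnd hGsnd (monotone_comp_affine (fun n => (hF n).1) ha)
    (fun n => div_pos (hα n) (ha n)) h1 h₂

theorem khintchine_law_of_types_defective
    (c : ℝ) (hc0 : 0 < c) (hc1 : c < 1)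
    (F : ℕ → ℝ → ℝ) (hF : ∀ n, IsDefectiveDF c (F n))
    (G Gs : ℝ → ℝ) (hG : IsDefectiveDF c G) (hGs : IsDefectiveDF c Gs)
    (hGnd : ∃ x, c < G x ∧ G x < 1) (hGsnd : ∃ x, c < Gs x ∧ Gs x < 1)
    (a b α β : ℕ → ℝ) (ha : ∀ n, 0 < a n) (hα : ∀ n, 0 < α n)
    (h1 : ∀ x : ℝ, ContinuousAt G x →
      Tendsto (fun n => F n (a n * x + b n)) atTop (𝓝 (G x)))
    (h2 : ∀ x : ℝ, ContinuousAt Gs x →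
      Tendsto (fun n => F n (α n * x + β n)) atTop (𝓝 (Gs x))) :
    ∃ A B : ℝ, 0 < A ∧
      Tendsto (fun n => α n / a n) atTop (𝓝 A) ∧
      Tendsto (fun n => (β n - b n) / a n) atTop (𝓝 B) ∧
      ∀ x : ℝ, Gs x = G (A * x + B) :=
  khintchine_law_of_types_defective_general c F hF G Gs hG hGs hGnd hGsnd a b α β ha hα h1 h2
end

section
/- Let α > 0 and let P_α be the Pareto distribution function: P_α(x) = max(1 − x^{−α}, 0) for x > 0 and P_α(x) = 0 for x ≤ 0. Then for every integer n ≥ 1 and every x ∈ ℝ, max(n·P_α(n^{1/α}·x) − (n−1), 0) = P_α(x); that is, P_α is freely max-stable with normalizing constants aₙ = n^{1/α} and bₙ = 0. -/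
open Filter Topology

noncomputable def freePow (F : ℝ → ℝ) (n : ℕ) (x : ℝ) : ℝ :=
  max ((n : ℝ) * F x - ((n : ℝ) - 1)) 0

/-- Type II free extreme value law: the Pareto distribution function. -/
noncomputable def paretoDF (α : ℝ) (x : ℝ) : ℝ :=
  if 0 < x then max (1 - x ^ (-α)) 0 else 0

/-! For `x > 0` the Pareto tail `x ^ (-α)` is divided by `n` when `x` is scaled by `n ^ (1 / α)`, and
the `n`-fold free extremal power of `max (1 - t / n) 0` is exactly `max (1 - t) 0`: the truncation at
`0` is reached inside precisely when it is reached outside. For `x ≤ 0` both sides vanish. -/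

theorem max_mul_max_one_sub_div_sub (n t : ℝ) (hn : 1 ≤ n) :
    max (n * max (1 - t / n) 0 - (n - 1)) 0 = max (1 - t) 0 := by
  have hn0 : 0 < n := by linarith
  rcases le_total t n with htn | hnt
  · have hdiv : 0 ≤ 1 - t / n := by rw [sub_nonneg, div_le_one hn0]; exact htn
    rw [max_eq_left hdiv, mul_sub, mul_div_cancel₀ t hn0.ne']
    ring_nf
  · have hdiv : 1 - t / n ≤ 0 := by rw [sub_nonpos, one_le_div hn0]; exact hnt
    rw [max_eq_right hdiv, max_eq_right (by linarith), max_eq_right (by linarith)]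

theorem freePow_of_eq_zero {F : ℝ → ℝ} {n : ℕ} {x : ℝ} (hn : 1 ≤ n) (hF : F x = 0) :
    freePow F n x = 0 := by
  have hn' : (1 : ℝ) ≤ n := by exact_mod_cast hn
  rw [freePow, hF, mul_zero, max_eq_right (by linarith)]

theorem paretoDF_of_pos {α x : ℝ} (hx : 0 < x) : paretoDF α x = max (1 - x ^ (-α)) 0 :=
  if_pos hx

theorem paretoDF_of_nonpos {α x : ℝ} (hx : x ≤ 0) : paretoDF α x = 0 :=
  if_neg hx.not_gt

theorem rpow_one_div_mul_rpow_neg {α n x : ℝ} (hα : α ≠ 0) (hn : 0 ≤ n) (hx : 0 ≤ x) :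
    (n ^ (1 / α) * x) ^ (-α) = x ^ (-α) / n := by
  rw [Real.mul_rpow (Real.rpow_nonneg hn _) hx, ← Real.rpow_mul hn,
    show 1 / α * -α = -1 by field_simp, Real.rpow_neg_one, inv_mul_eq_div]

/-- The Pareto distribution function is freely max-stable with
normalizing constants `aₙ = n^{1/α}`, `bₙ = 0`. -/
theorem paretoDF_freelyMaxStable (α : ℝ) (hα : 0 < α) :
    ∀ n : ℕ, 1 ≤ n → ∀ x : ℝ,
      freePow (paretoDF α) n ((n : ℝ) ^ (1 / α) * x + 0) = paretoDF α x := by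
  intro n hn x
  have hn' : (1 : ℝ) ≤ n := by exact_mod_cast hn
  have hscale : 0 < (n : ℝ) ^ (1 / α) := Real.rpow_pos_of_pos (by linarith) _
  rw [add_zero]
  rcases le_or_gt x 0 with hx | hx
  · rw [paretoDF_of_nonpos hx,
      freePow_of_eq_zero hn (paretoDF_of_nonpos (mul_nonpos_of_nonneg_of_nonpos hscale.le hx))]
  · rw [freePow, paretoDF_of_pos (mul_pos hscale hx),
      rpow_one_div_mul_rpow_neg hα.ne' (by linarith) hx.le, paretoDF_of_pos hx,
      max_mul_max_one_sub_div_sub _ _ hn']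
end

section
/- Let F be a distribution function and α > 0. There exist aₙ > 0 and bₙ ∈ ℝ such that F^{⊡n}(aₙ·x + bₙ) → P_α(x) as n → ∞ for every x ∈ ℝ, if and only if there exist aₙ > 0 and bₙ ∈ ℝ such that F(aₙ·x + bₙ)^n → Φ_α(x) as n → ∞ for every x ∈ ℝ, where Φ_α(x) = exp(−x^{−α}) for x > 0 and Φ_α(x) = 0 for x ≤ 0. In other words, the free max-domain of attraction of the Pareto distribution with exponent α coincides with the classical max-domain of attraction of the Fréchet distribution Φ_α. -/
open Filter Topology

def IsDistFun (F : ℝ → ℝ) : Prop :=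
  Monotone F ∧ (∀ x, ContinuousWithinAt F (Set.Ici x) x) ∧
    Tendsto F atBot (𝓝 0) ∧ Tendsto F atTop (𝓝 1)

/-- The Fréchet distribution function. -/
noncomputable def frechetDF (α : ℝ) (x : ℝ) : ℝ :=
  if 0 < x then Real.exp (-x ^ (-α)) else 0

/-!
Both limits are governed by the tail condition `n (1 - F (a n x + b n)) → x ^ (-α)`. Since
`freePow F n y = max (1 - n (1 - F y)) 0` and `F y ^ n ≈ exp (-n (1 - F y))`, the classical limit
at `x > 0` is equivalent to the tail condition at `x`, whereas the free limit gives it only where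
the Pareto law is positive, i.e. for `x > 1`. It extends to every `x > 0` by comparing `(a n, b n)`
with the normalisation `(k ^ (1/α) a (n / k), b (n / k))`, which satisfies the tail condition for
`x > k ^ (-1/α)`: two normalisations with the same limit on a common interval are asymptotically
equal (convergence of types). For `x ≤ 0` both sides tend to `0`, by monotonicity and by
Bernoulli's inequality `freePow F n y ≤ F y ^ n`.
-/

theorem IsDistFun.nonneg {F : ℝ → ℝ} (hF : IsDistFun F) (x : ℝ) : 0 ≤ F x :=
  le_of_tendsto hF.2.2.1 (eventually_atBot.2 ⟨x, fun _ hy => hF.1 hy⟩)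

section AntitoneFamily

variable {ι : Type*} {l : Filter ι} {g : ι → ℝ → ℝ} {G : ℝ → ℝ} {s : ℝ}
  {xs : ι → ℝ}

theorem tendsto_apply_of_antitone_of_tendsto (hg : ∀ i, Antitone (g i))
    (hlim : ∀ t, s < t → Tendsto (fun i => g i t) l (𝓝 (G t))) {x : ℝ} (hx : s < x)
    (hG : ContinuousAt G x) (hxs : Tendsto xs l (𝓝 x)) :
    Tendsto (fun i => g i (xs i)) l (𝓝 (G x)) := by
  refine tendsto_order.2 ⟨fun c hc => ?_, fun c hc => ?_⟩
  · obtain ⟨t, hct, hxt⟩ := (((hG.eventually (lt_mem_nhds hc)).filter_mono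
      nhdsWithin_le_nhds).and (self_mem_nhdsWithin (s := Set.Ioi x))).exists
    filter_upwards [(hlim t (hx.trans hxt)).eventually (lt_mem_nhds hct),
      hxs.eventually (gt_mem_nhds hxt)] with i hi hxi
    exact hi.trans_le (hg i hxi.le)
  · obtain ⟨t, ⟨hct, hst⟩, htx⟩ := ((((hG.eventually (gt_mem_nhds hc)).and
      (lt_mem_nhds hx)).filter_mono nhdsWithin_le_nhds).and
      (self_mem_nhdsWithin (s := Set.Iio x))).exists
    filter_upwards [(hlim t hst).eventually (gt_mem_nhds hct),
      hxs.eventually (lt_mem_nhds htx)] with i hi hxi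
    exact (hg i hxi.le).trans_lt hi

theorem tendsto_of_tendsto_apply_of_antitone (hg : ∀ i, Antitone (g i))
    (hlim : ∀ t, s < t → Tendsto (fun i => g i t) l (𝓝 (G t)))
    (hG : StrictAntiOn G (Set.Ioi s)) {y : ℝ} (hy : s < y)
    (h : Tendsto (fun i => g i (xs i)) l (𝓝 (G y))) :
    Tendsto xs l (𝓝 y) := by
  refine tendsto_order.2 ⟨fun c hc => ?_, fun c hc => ?_⟩
  · obtain ⟨t, hcst, hty⟩ := exists_between (max_lt hc hy)
    have hst : s < t := (le_max_right c s).trans_lt hcst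
    filter_upwards [h.eventually_lt (hlim t hst) (hG hst hy hty)] with i hi
    exact (le_max_left c s).trans_lt
      (hcst.trans_le (not_lt.1 fun hxt => (hg i hxt.le).not_gt hi))
  · obtain ⟨t, hyt, htc⟩ := exists_between hc
    filter_upwards [(hlim t (hy.trans hyt)).eventually_lt h (hG hy (hy.trans hyt) hyt)] with i hi
    exact (not_le.1 fun hxt => (hg i hxt).not_gt hi).trans htc

end AntitoneFamily

theorem tendsto_pow_of_tendsto_mul_one_sub {f : ℕ → ℝ} {c : ℝ}
    (h : Tendsto (fun n : ℕ => (n : ℝ) * (1 - f n)) atTop (𝓝 c)) :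
    Tendsto (fun n => f n ^ n) atTop (𝓝 (Real.exp (-c))) := by
  have := Real.tendsto_one_add_pow_exp_of_tendsto (g := fun n => f n - 1) (t := -c)
    (by simpa only [neg_mul_eq_mul_neg, neg_sub] using h.neg)
  simpa only [add_sub_cancel] using this

theorem tendsto_mul_one_sub_of_tendsto_pow {f : ℕ → ℝ} {c : ℝ} (hf : ∀ n, 0 ≤ f n)
    (h : Tendsto (fun n => f n ^ n) atTop (𝓝 (Real.exp (-c)))) :
    Tendsto (fun n : ℕ => (n : ℝ) * (1 - f n)) atTop (𝓝 c) := by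
  -- `f n ^ n = g n (n * (1 - f n))` for the antitone family
  -- `g n t = (1 - t / n)₊ ^ n → exp (-t)`
  set g : ℕ → ℝ → ℝ := fun n t => max (1 - t / n) 0 ^ n
  have hg : ∀ n, Antitone (g n) := fun n t₁ t₂ ht =>
    pow_le_pow_left₀ (le_max_right _ _)
      (max_le_max (sub_le_sub_left (div_le_div_of_nonneg_right ht n.cast_nonneg) 1) le_rfl) n
  have hlim : ∀ t, c - 1 < t → Tendsto (fun n => g n t) atTop (𝓝 (Real.exp (-t))) := by
    intro t _
    refine (Real.tendsto_one_add_div_pow_exp (-t)).congr' ?_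
    filter_upwards [eventually_ge_atTop ⌈t⌉₊, eventually_gt_atTop 0] with n hn hn0
    have hnpos : (0 : ℝ) < n := Nat.cast_pos.2 hn0
    change _ = max (1 - t / n) 0 ^ n
    rw [max_eq_left (sub_nonneg.2 ((div_le_one hnpos).2 (Nat.ceil_le.1 hn))), neg_div,
      sub_eq_add_neg]
  refine tendsto_of_tendsto_apply_of_antitone hg hlim
    (fun _ _ _ _ h => Real.exp_lt_exp.2 (neg_lt_neg h)) (sub_one_lt c)
    (h.congr fun n => ?_)
  rcases n.eq_zero_or_pos with rfl | hn
  · simp [g]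
  · simp only [g]
    rw [mul_div_cancel_left₀ _ (Nat.cast_pos.2 hn).ne', sub_sub_cancel, max_eq_left (hf n)]

theorem tendsto_natCast_div_natCast_div {k : ℕ} (hk : k ≠ 0) :
    Tendsto (fun n : ℕ => (n : ℝ) / (n / k : ℕ)) atTop (𝓝 k) := by
  have hk' : (0 : ℝ) < k := Nat.cast_pos.2 (Nat.pos_of_ne_zero hk)
  have hfloor := (tendsto_nat_floor_div_atTop (R := ℝ)).comp
    (tendsto_natCast_atTop_atTop.atTop_div_const hk')
  have := (hfloor.inv₀ one_ne_zero).const_mul (k : ℝ)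
  rw [inv_one, mul_one] at this
  refine this.congr fun n => ?_
  simp only [Function.comp_apply, Nat.floor_div_eq_div, inv_div]
  rw [mul_div_assoc', mul_div_cancel₀ _ hk'.ne']

/-- On `(0, ∞)` this tail condition is equivalent to `F (a n t + b n) ^ n → Φ_α t`. -/
def ParetoTailOn (F : ℝ → ℝ) (α : ℝ) (a b : ℕ → ℝ) (s : ℝ) : Prop :=
  ∀ t, s < t →
    Tendsto (fun n : ℕ => (n : ℝ) * (1 - F (a n * t + b n))) atTop (𝓝 (t ^ (-α)))

namespace ParetoTailOn

variable {F : ℝ → ℝ} {α : ℝ} {a b : ℕ → ℝ} {s : ℝ}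

theorem rescale (hα : α ≠ 0) (h : ParetoTailOn F α a b s) (hs : 0 ≤ s) {k : ℕ}
    (hk : k ≠ 0) :
    ParetoTailOn F α (fun n => a (n / k) * (k : ℝ) ^ α⁻¹) (fun n => b (n / k))
      (s / (k : ℝ) ^ α⁻¹) := by
  intro t ht
  have hk' : (0 : ℝ) < k := Nat.cast_pos.2 (Nat.pos_of_ne_zero hk)
  set K : ℝ := (k : ℝ) ^ α⁻¹
  have hK : 0 < K := Real.rpow_pos_of_pos hk' _
  have ht0 : 0 < t := (div_nonneg hs hK.le).trans_lt ht
  have hKt : s < K * t := by rwa [div_lt_iff₀ hK, mul_comm] at ht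
  have hKα : K ^ (-α) = (k : ℝ)⁻¹ := by
    rw [← Real.rpow_mul hk'.le, inv_mul_eq_div, neg_div, div_self hα, Real.rpow_neg_one]
  have := (tendsto_natCast_div_natCast_div hk).mul
    ((h (K * t) hKt).comp (Nat.tendsto_div_const_atTop hk))
  rw [Real.mul_rpow hK.le ht0.le, hKα, ← mul_assoc, mul_inv_cancel₀ hk'.ne', one_mul] at this
  refine this.congr' ?_
  filter_upwards [eventually_ge_atTop k] with n hn
  have hnk : ((n / k : ℕ) : ℝ) ≠ 0 :=
    Nat.cast_ne_zero.2 (Nat.div_pos hn (Nat.pos_of_ne_zero hk)).ne'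
  simp only [Function.comp_apply, mul_assoc]
  rw [← mul_assoc, div_mul_cancel₀ _ hnk]

theorem of_normalization (hF : Monotone F) (hα : 0 < α) {a' b' : ℕ → ℝ} {s' : ℝ}
    (ha' : ∀ n, 0 < a' n) (h : ParetoTailOn F α a b s) (h' : ParetoTailOn F α a' b' s')
    (hs' : 0 ≤ s') : ParetoTailOn F α a b s' := by
  set g : ℕ → ℝ → ℝ := fun n t => n * (1 - F (a' n * t + b' n))
  have hg : ∀ n, Antitone (g n) := fun n t₁ t₂ ht =>
    mul_le_mul_of_nonneg_left (sub_le_sub_left (hF (by gcongr; exact (ha' n).le)) 1)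
      n.cast_nonneg
  have hG : StrictAntiOn (fun t : ℝ => t ^ (-α)) (Set.Ioi s') := fun t₁ ht₁ _ _ ht =>
    Real.rpow_lt_rpow_of_neg (hs'.trans_lt ht₁) ht (neg_neg_of_pos hα)
  set τ : ℕ → ℝ → ℝ := fun n t => a n / a' n * t + (b n - b' n) / a' n
  have hgτ : ∀ n t, g n (τ n t) = n * (1 - F (a n * t + b n)) := by
    intro n t
    simp only [g, τ]
    congr 3
    field_simp [(ha' n).ne']
    ring
  set p := max s s' + 1
  have hτ : ∀ t, max s s' < t → Tendsto (fun n => τ n t) atTop (𝓝 t) := fun t ht =>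
    tendsto_of_tendsto_apply_of_antitone hg h' hG ((le_max_right s s').trans_lt ht)
      ((h t ((le_max_left s s').trans_lt ht)).congr fun n => (hgτ n t).symm)
  intro x hx
  -- `τ n t → t` at the two points `p`, `p + 1`, hence everywhere since `τ n` is affine
  have hτx : Tendsto (fun n => τ n x) atTop (𝓝 x) := by
    have := ((hτ p (lt_add_one _)).const_mul (p + 1 - x)).add
      ((hτ (p + 1) (by linarith)).const_mul (x - p))
    rw [show (p + 1 - x) * p + (x - p) * (p + 1) = x by ring] at this
    exact this.congr fun n => by simp only [τ]; ring
  exact (tendsto_apply_of_antitone_of_tendsto hg h' hx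
    (Real.continuousAt_rpow_const _ _ (Or.inl (hs'.trans_lt hx).ne')) hτx).congr (hgτ · x)

theorem extend_to_zero (hF : Monotone F) (hα : 0 < α) (ha : ∀ n, 0 < a n)
    (h : ParetoTailOn F α a b s) (hs : 0 ≤ s) : ParetoTailOn F α a b 0 := by
  intro x hx
  obtain ⟨k, hk⟩ := exists_nat_gt ((s / x) ^ α)
  have hk0 : k ≠ 0 := by
    rintro rfl
    exact (Real.rpow_nonneg (div_nonneg hs hx.le) α).not_gt (by exact_mod_cast hk)
  have hK : 0 < (k : ℝ) ^ α⁻¹ :=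
    Real.rpow_pos_of_pos (Nat.cast_pos.2 (Nat.pos_of_ne_zero hk0)) _
  have hsx : s / (k : ℝ) ^ α⁻¹ < x := by
    rw [div_lt_iff₀ hK, ← div_lt_iff₀' hx]
    calc s / x = ((s / x) ^ α) ^ α⁻¹ := by
          rw [← Real.rpow_mul (div_nonneg hs hx.le), mul_inv_cancel₀ hα.ne', Real.rpow_one]
      _ < (k : ℝ) ^ α⁻¹ :=
          Real.rpow_lt_rpow (Real.rpow_nonneg (div_nonneg hs hx.le) α) hk (inv_pos.2 hα)
  exact h.of_normalization hF hα (fun n => mul_pos (ha _) hK) (h.rescale hα.ne' hs hk0)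
    (div_nonneg hs hK.le) x hsx

end ParetoTailOn

theorem freePow_eq_max_one_sub (F : ℝ → ℝ) (n : ℕ) (x : ℝ) :
    freePow F n x = max (1 - n * (1 - F x)) 0 := by
  rw [freePow]
  ring_nf

theorem freePow_le_pow {F : ℝ → ℝ} {x : ℝ} (hF : 0 ≤ F x) (n : ℕ) :
    freePow F n x ≤ F x ^ n := by
  refine max_le ?_ (pow_nonneg hF n)
  have := one_add_mul_le_pow (a := F x - 1) (by linarith) n
  rw [add_sub_cancel] at this
  linarith

theorem paretoTailOn_one_of_tendsto_freePow {F : ℝ → ℝ} {α : ℝ} (hα : 0 < α)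
    {a b : ℕ → ℝ}
    (h : ∀ x, Tendsto (fun n => freePow F n (a n * x + b n)) atTop (𝓝 (paretoDF α x))) :
    ParetoTailOn F α a b 1 := by
  intro t ht
  have hpos : 0 < 1 - t ^ (-α) := sub_pos.2 (Real.rpow_lt_one_of_one_lt_of_neg ht (by linarith))
  have ht' := h t
  rw [paretoDF, if_pos (one_pos.trans ht), max_eq_left hpos.le] at ht'
  have hev : ∀ᶠ n : ℕ in atTop,
      freePow F n (a n * t + b n) = 1 - n * (1 - F (a n * t + b n)) := by
    filter_upwards [ht'.eventually (lt_mem_nhds hpos)] with n hn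
    rw [freePow_eq_max_one_sub] at hn ⊢
    exact max_eq_left ((lt_max_iff.1 hn).resolve_right (lt_irrefl 0)).le
  simpa using (tendsto_const_nhds (x := (1 : ℝ))).sub (ht'.congr' hev)

theorem tendsto_frechetDF_nhdsGT_zero {α : ℝ} (hα : 0 < α) :
    Tendsto (frechetDF α) (𝓝[>] 0) (𝓝 0) := by
  refine (Real.tendsto_exp_atBot.comp (tendsto_neg_atTop_atBot.comp
    (tendsto_rpow_neg_nhdsGT_zero (neg_neg_of_pos hα)))).congr' ?_
  filter_upwards [self_mem_nhdsWithin] with x hx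
  simp [frechetDF, Set.mem_Ioi.1 hx]

theorem ParetoTailOn.tendsto_pow_frechetDF {F : ℝ → ℝ} (hF : IsDistFun F) {α : ℝ}
    (hα : 0 < α) {a b : ℕ → ℝ} (ha : ∀ n, 0 < a n) (h : ParetoTailOn F α a b 0)
    (x : ℝ) :
    Tendsto (fun n => F (a n * x + b n) ^ n) atTop (𝓝 (frechetDF α x)) := by
  by_cases hx : 0 < x
  · simpa [frechetDF, hx] using tendsto_pow_of_tendsto_mul_one_sub (h x hx)
  rw [frechetDF, if_neg hx]
  refine tendsto_order.2 ⟨fun c hc => Eventually.of_forall fun n =>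
    hc.trans_le (pow_nonneg (hF.nonneg _) n), fun c hc => ?_⟩
  -- for `x ≤ 0` the powers are dominated by those at a small `y > 0`
  obtain ⟨y, hyc, hy⟩ := (((tendsto_frechetDF_nhdsGT_zero hα).eventually (gt_mem_nhds hc)).and
    self_mem_nhdsWithin).exists
  have hy' := tendsto_pow_of_tendsto_mul_one_sub (h y hy)
  rw [frechetDF, if_pos hy] at hyc
  filter_upwards [hy'.eventually (gt_mem_nhds hyc)] with n hn
  refine lt_of_le_of_lt (pow_le_pow_left₀ (hF.nonneg _) (hF.1 ?_) n) hn
  nlinarith [ha n]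

theorem tendsto_freePow_paretoDF_of_tendsto_pow_frechetDF {F : ℝ → ℝ} (hF : IsDistFun F)
    {α : ℝ} {a b : ℕ → ℝ} {x : ℝ}
    (h : Tendsto (fun n => F (a n * x + b n) ^ n) atTop (𝓝 (frechetDF α x))) :
    Tendsto (fun n => freePow F n (a n * x + b n)) atTop (𝓝 (paretoDF α x)) := by
  by_cases hx : 0 < x
  · rw [frechetDF, if_pos hx] at h
    rw [paretoDF, if_pos hx]
    simpa only [freePow_eq_max_one_sub] using (tendsto_const_nhds.sub
      (tendsto_mul_one_sub_of_tendsto_pow (fun n => hF.nonneg _) h)).max tendsto_const_nhds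
  · rw [frechetDF, if_neg hx] at h
    rw [paretoDF, if_neg hx]
    exact squeeze_zero (fun n => le_max_right _ _) (fun n => freePow_le_pow (hF.nonneg _) n) h

/-- The free max-domain of attraction of the Pareto law with exponent `α`
coincides with the classical max-domain of attraction of the Fréchet law. -/
theorem freeDomAttr_pareto_iff_classicalDomAttr_frechet
    (F : ℝ → ℝ) (hF : IsDistFun F) (α : ℝ) (hα : 0 < α) :
    (∃ a b : ℕ → ℝ, (∀ n, 0 < a n) ∧
        ∀ x : ℝ, Tendsto (fun n => freePow F n (a n * x + b n)) atTop
          (𝓝 (paretoDF α x))) ↔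
      (∃ a b : ℕ → ℝ, (∀ n, 0 < a n) ∧
        ∀ x : ℝ, Tendsto (fun n => F (a n * x + b n) ^ n) atTop
          (𝓝 (frechetDF α x))) := by
  constructor
  · rintro ⟨a, b, ha, hfree⟩
    have htail :=
      (paretoTailOn_one_of_tendsto_freePow hα hfree).extend_to_zero hF.1 hα ha zero_le_one
    exact ⟨a, b, ha, htail.tendsto_pow_frechetDF hF hα ha⟩
  · rintro ⟨a, b, ha, hclassical⟩
    exact ⟨a, b, ha, fun x =>
      tendsto_freePow_paretoDF_of_tendsto_pow_frechetDF hF (hclassical x)⟩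
end

section
/- Let F be a distribution function and α > 0. The following are equivalent: (i) there exist aₙ > 0 and bₙ ∈ ℝ such that for every x ∈ ℝ, F^{⊡n}(aₙ·x + bₙ) → B_α(x) as n → ∞; (iii) ω(F) = sup{x ∈ ℝ : F(x) < 1} is finite, and for every x > 0, (1 − F(ω(F) − x·h))/(1 − F(ω(F) − h)) → x^α as h ↓ 0 (i.e., h ↦ 1 − F(ω(F) − h) is regularly varying at 0 of exponent α; note 1 − F(ω(F) − h) > 0 for h > 0). -/
open Filter Topology

noncomputable def betaDF (α : ℝ) (x : ℝ) : ℝ :=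
  if x ≤ -1 then 0 else if x ≤ 0 then 1 - |x| ^ α else 1

/-!
Write `ω = sup {F < 1}` and `U h = 1 - F (ω - h)`. Since `F^{⊡n} = max (1 - n (1 - F)) 0`,
convergence to `B_α` amounts to `n (1 - F (b n - a n t)) → t ^ α` for `0 ≤ t < 1`.

(i) ⇒ (iii): comparing the normalisations at `n` and `2 n` (convergence of types) gives
`a (2 n) / a n → 2 ^ (-1/α) < 1` and `(b (2 n) - b n) / a n → 0`, so along `2 ^ k n` the `b`
converge geometrically fast. Their limit is the least upper bound of `{F < 1}`, hence `ω` is finite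
and `b n = ω + o (a n)`. Then `n U (a n t) → t ^ α` and `a n → 0`, and squeezing a small `h`
between consecutive `a n t` turns this into `U (x h) / U h → x ^ α`.

(iii) ⇒ (i): regular variation with `α ≠ 0` forces `U (0+) = 0`, so the generalised inverse
`a n = inf {h > 0 | 1 / (n + 2) ≤ U h}` is positive and satisfies `n U (a n) → 1`, hence
`n U (a n x) → x ^ α`; with `b n = ω` this is the convergence to `B_α`.
-/

open Set

def RegularlyVaryingAtZero (U : ℝ → ℝ) (α : ℝ) : Prop :=
  ∀ x, 0 < x → Tendsto (fun h => U (x * h) / U h) (𝓝[>] 0) (𝓝 (x ^ α))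

lemma tendsto_zero_of_tendsto_natCast_mul {u : ℕ → ℝ} {L : ℝ}
    (hu : Tendsto (fun n : ℕ => (n : ℝ) * u n) atTop (𝓝 L)) : Tendsto u atTop (𝓝 0) := by
  rw [← zero_mul L]
  refine (tendsto_one_div_atTop_nhds_zero_nat.mul hu).congr' ?_
  filter_upwards [eventually_ne_atTop 0] with n hn
  field_simp

lemma tendsto_succ_mul_of_tendsto_natCast_mul {u : ℕ → ℝ} {L : ℝ}
    (hu : Tendsto (fun n : ℕ => (n : ℝ) * u n) atTop (𝓝 L)) :
    Tendsto (fun n : ℕ => ((n : ℝ) + 1) * u n) atTop (𝓝 L) := by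
  simpa using (hu.add (tendsto_zero_of_tendsto_natCast_mul hu)).congr fun n => by ring

lemma exists_tendsto_of_abs_sub_le_geometric {A B : ℕ → ℝ} {κ ε : ℝ} (hA : ∀ k, 0 ≤ A k)
    (hκ0 : 0 ≤ κ) (hκ1 : κ < 1) (hε : 0 ≤ ε)
    (hstep : ∀ k, A (k + 1) ≤ κ * A k ∧ |B (k + 1) - B k| ≤ ε * A k) :
    Tendsto A atTop (𝓝 0) ∧ ∃ L, Tendsto B atTop (𝓝 L) ∧ |B 0 - L| ≤ ε * A 0 / (1 - κ) := by
  have hA_le : ∀ k, A k ≤ κ ^ k * A 0 := by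
    intro k
    induction k with
    | zero => simp
    | succ k ih =>
      calc A (k + 1) ≤ κ * A k := (hstep k).1
        _ ≤ κ * (κ ^ k * A 0) := by gcongr
        _ = κ ^ (k + 1) * A 0 := by ring
  have hdist : ∀ k, dist (B k) (B (k + 1)) ≤ ε * A 0 * κ ^ k := fun k =>
    calc dist (B k) (B (k + 1)) = |B (k + 1) - B k| := by rw [dist_comm, Real.dist_eq]
      _ ≤ ε * A k := (hstep k).2
      _ ≤ ε * (κ ^ k * A 0) := by gcongr; exact hA_le k
      _ = ε * A 0 * κ ^ k := by ring
  refine ⟨squeeze_zero hA hA_le ?_, ?_⟩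
  · simpa using (tendsto_pow_atTop_nhds_zero_of_lt_one hκ0 hκ1).mul_const (A 0)
  obtain ⟨L, hL⟩ := cauchySeq_tendsto_of_complete (cauchySeq_of_le_geometric κ _ hκ1 hdist)
  exact ⟨L, hL, by simpa [Real.dist_eq] using
    dist_le_of_le_geometric_of_tendsto₀ κ _ hκ1 hdist hL⟩

section ConvergenceOfTypes

variable {ι : Type*} {l : Filter ι} {u : ι → ℝ → ℝ}

lemma eventually_lt_of_tendsto_apply (hu : ∀ i, Antitone (u i)) {p q : ι → ℝ} {A B : ℝ}
    (hp : Tendsto (fun i => u i (p i)) l (𝓝 A)) (hq : Tendsto (fun i => u i (q i)) l (𝓝 B))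
    (hAB : A < B) : ∀ᶠ i in l, q i < p i :=
  (hp.eventually_lt hq hAB).mono fun i hi => lt_of_not_ge fun hle => (hu i hle).not_gt hi

variable {ψ : ℝ → ℝ} {a b : ι → ℝ}

lemma tendsto_sub_div_of_tendsto_apply (hu : ∀ i, Antitone (u i))
    (hψ : StrictMonoOn ψ (Ico 0 1)) (ha : ∀ i, 0 < a i)
    (h : ∀ s ∈ Ico (0 : ℝ) 1, Tendsto (fun i => u i (b i - a i * s)) l (𝓝 (ψ s)))
    {q : ι → ℝ} {τ : ℝ} (hτ : τ ∈ Ioo (0 : ℝ) 1)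
    (hq : Tendsto (fun i => u i (q i)) l (𝓝 (ψ τ))) :
    Tendsto (fun i => (q i - b i) / a i) l (𝓝 (-τ)) := by
  have hτ' : τ ∈ Ico (0 : ℝ) 1 := Ioo_subset_Ico_self hτ
  refine tendsto_order.2 ⟨fun m hm => ?_, fun m hm => ?_⟩
  · set s := min (-m) ((τ + 1) / 2)
    have hτs : τ < s := lt_min (by linarith) (by linarith [hτ.2])
    have hs : s ∈ Ico (0 : ℝ) 1 :=
      ⟨by linarith [hτ.1], by linarith [min_le_right (-m) ((τ + 1) / 2), hτ.2]⟩
    filter_upwards [eventually_lt_of_tendsto_apply hu hq (h s hs) (hψ hτ' hs hτs)] with i hi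
    rw [lt_div_iff₀ (ha i)]
    nlinarith [min_le_left (-m) ((τ + 1) / 2), ha i]
  · set s := max (-m) (τ / 2)
    have hsτ : s < τ := max_lt (by linarith) (by linarith [hτ.1])
    have hs : s ∈ Ico (0 : ℝ) 1 :=
      ⟨by linarith [le_max_right (-m) (τ / 2), hτ.1], by linarith [hτ.2]⟩
    filter_upwards [eventually_lt_of_tendsto_apply hu (h s hs) hq (hψ hs hτ' hsτ)] with i hi
    rw [div_lt_iff₀ (ha i)]
    nlinarith [le_max_left (-m) (τ / 2), ha i]

/-- Khinchin's convergence of types, for limits `ψ t` and `ψ (c t)`. -/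
lemma tendsto_div_and_tendsto_sub_div_of_tendsto_apply (hu : ∀ i, Antitone (u i))
    (hψ : StrictMonoOn ψ (Ico 0 1)) (ha : ∀ i, 0 < a i)
    (h : ∀ s ∈ Ico (0 : ℝ) 1, Tendsto (fun i => u i (b i - a i * s)) l (𝓝 (ψ s)))
    {a' b' : ι → ℝ} {c : ℝ} (hc0 : 0 < c) (hc1 : c ≤ 1)
    (h' : ∀ t ∈ Ico (0 : ℝ) 1, Tendsto (fun i => u i (b' i - a' i * t)) l (𝓝 (ψ (c * t)))) :
    Tendsto (fun i => a' i / a i) l (𝓝 c) ∧ Tendsto (fun i => (b' i - b i) / a i) l (𝓝 0) := by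
  have hz : ∀ t ∈ Ioc (0 : ℝ) (1 / 2),
      Tendsto (fun i => (b' i - a' i * t - b i) / a i) l (𝓝 (-(c * t))) := fun t ht =>
    tendsto_sub_div_of_tendsto_apply hu hψ ha h ⟨by nlinarith [ht.1], by nlinarith [ht.2]⟩
      (h' t ⟨ht.1.le, by linarith [ht.2]⟩)
  -- with `z t` the sequence in `hz`:
  -- `a' / a = 4 (z (1/4) - z (1/2))` and `(b' - b) / a = 2 z (1/4) - z (1/2)`
  have h₁ := hz (1 / 4) ⟨by norm_num, by norm_num⟩
  have h₂ := hz (1 / 2) ⟨by norm_num, by norm_num⟩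
  constructor
  · convert (h₁.sub h₂).const_mul 4 using 1
    · ext i; field_simp [(ha i).ne']; ring
    · ring_nf
  · convert (h₁.const_mul 2).sub h₂ using 1
    · ext i; field_simp [(ha i).ne']; ring
    · ring_nf

end ConvergenceOfTypes

section MonotoneTail

variable {U : ℝ → ℝ}

lemma tendsto_mul_apply_of_tendsto_mul_apply_add (hU : Monotone U) {a d : ℕ → ℝ}
    (ha : ∀ n, 0 < a n) (hd : Tendsto (fun n => d n / a n) atTop (𝓝 0)) {ψ : ℝ → ℝ}
    (hT : ∀ s ∈ Ico (0 : ℝ) 1, Tendsto (fun n : ℕ => (n : ℝ) * U (d n + a n * s)) atTop (𝓝 (ψ s)))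
    {t : ℝ} (ht : t ∈ Ioo (0 : ℝ) 1) (hψ : ContinuousAt ψ t) :
    Tendsto (fun n : ℕ => (n : ℝ) * U (a n * t)) atTop (𝓝 (ψ t)) := by
  refine tendsto_order.2 ⟨fun m hm => ?_, fun m hm => ?_⟩
  · obtain ⟨s, hms, hs⟩ := ((hψ.eventually (lt_mem_nhds hm)).filter_mono nhdsWithin_le_nhds
      |>.and (Ico_mem_nhdsLT ht.1)).exists
    filter_upwards [(hT s ⟨hs.1, hs.2.trans ht.2⟩).eventually (lt_mem_nhds hms),
      hd.eventually (gt_mem_nhds (sub_pos.2 hs.2))] with n hn hdn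
    rw [div_lt_iff₀ (ha n)] at hdn
    exact hn.trans_le (by gcongr; exact hU (by linarith))
  · obtain ⟨s, hms, hs⟩ := ((hψ.eventually (gt_mem_nhds hm)).filter_mono nhdsWithin_le_nhds
      |>.and (Ioo_mem_nhdsGT ht.2)).exists
    filter_upwards [(hT s ⟨ht.1.le.trans hs.1.le, hs.2⟩).eventually (gt_mem_nhds hms),
      hd.eventually (lt_mem_nhds (neg_neg_of_pos (sub_pos.2 hs.1)))] with n hn hdn
    rw [lt_div_iff₀ (ha n)] at hdn
    exact (by gcongr; exact hU (by linarith) : (n : ℝ) * U (a n * t) ≤ _).trans_lt hn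

lemma tendsto_zero_of_tendsto_apply_zero (hU : Monotone U) (hpos : ∀ h, 0 < h → 0 < U h)
    {ι : Type*} {l : Filter ι} {x : ι → ℝ} (hx : ∀ i, 0 ≤ x i)
    (hUx : Tendsto (fun i => U (x i)) l (𝓝 0)) : Tendsto x l (𝓝 0) := by
  refine tendsto_order.2 ⟨fun m hm => Eventually.of_forall fun i => hm.trans_le (hx i),
    fun ε hε => ?_⟩
  filter_upwards [hUx.eventually (gt_mem_nhds (hpos ε hε))] with i hi
  exact lt_of_not_ge fun hle => (hU hle).not_gt hi

lemma exists_index_sandwich {s : ℕ → ℝ} (hs : ∀ n, 0 < s n) (hs0 : Tendsto s atTop (𝓝 0)) :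
    ∃ m : ℝ → ℕ, Tendsto m (𝓝[>] 0) atTop ∧ ∀ᶠ h in 𝓝[>] 0, s (m h + 1) ≤ h ∧ h < s (m h) := by
  have hbelow : ∀ K : ℕ, ∀ᶠ h in 𝓝[>] (0 : ℝ), ∀ n ∈ Iic K, h < s n := fun K =>
    (eventually_all_finite (finite_Iic K)).2 fun n _ =>
      (eventually_lt_nhds (hs n)).filter_mono nhdsWithin_le_nhds
  have hne : ∀ h : ℝ, 0 < h → {n | s (n + 1) ≤ h}.Nonempty := fun h hh =>
    ((tendsto_add_atTop_iff_nat 1).2 hs0 |>.eventually (gt_mem_nhds hh)).exists.imp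
      fun _ => le_of_lt
  refine ⟨fun h => sInf {n | s (n + 1) ≤ h}, tendsto_atTop.2 fun K => ?_, ?_⟩
  · filter_upwards [hbelow K, self_mem_nhdsWithin] with h hK hh
    by_contra! hlt
    exact (Nat.sInf_mem (hne h hh)).not_gt (hK _ (Nat.succ_le_of_lt hlt))
  · filter_upwards [hbelow 0, self_mem_nhdsWithin] with h h0 hh
    refine ⟨Nat.sInf_mem (hne h hh), ?_⟩
    cases hk : sInf {n | s (n + 1) ≤ h} with
    | zero => exact h0 0 (mem_Iic.2 le_rfl)
    | succ k => exact lt_of_not_ge (Nat.notMem_of_lt_sInf (hk ▸ Nat.lt_succ_self k :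
        k < sInf {n | s (n + 1) ≤ h}))

lemma tendsto_succ_mul_apply_of_sandwich (hU : Monotone U) {s : ℕ → ℝ} {L : ℝ}
    (hL : Tendsto (fun n : ℕ => (n : ℝ) * U (s n)) atTop (𝓝 L))
    {l : Filter ℝ} {m : ℝ → ℕ} (hm : Tendsto m l atTop) {g : ℝ → ℝ}
    (hg : ∀ᶠ h in l, s (m h + 1) ≤ g h ∧ g h ≤ s (m h)) :
    Tendsto (fun h => ((m h : ℝ) + 1) * U (g h)) l (𝓝 L) := by
  have hlow : Tendsto (fun h => ((m h : ℝ) + 1) * U (s (m h + 1))) l (𝓝 L) := by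
    exact_mod_cast ((tendsto_add_atTop_iff_nat 1).2 hL).comp hm
  refine tendsto_of_tendsto_of_tendsto_of_le_of_le' hlow
    ((tendsto_succ_mul_of_tendsto_natCast_mul hL).comp hm) ?_ ?_
  · filter_upwards [hg] with h hh using by gcongr; exact hU hh.1
  · filter_upwards [hg] with h hh using by simp only [Function.comp]; gcongr; exact hU hh.2

lemma regularlyVaryingAtZero_of_tendsto_mul_apply (hU : Monotone U) {a : ℕ → ℝ} (ha : ∀ n, 0 < a n)
    (ha0 : Tendsto a atTop (𝓝 0)) {α : ℝ}
    (hlim : ∀ t ∈ Ioo (0 : ℝ) 1, Tendsto (fun n : ℕ => (n : ℝ) * U (a n * t)) atTop (𝓝 (t ^ α))) :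
    RegularlyVaryingAtZero U α := by
  intro x hx
  set t := 1 / (2 * (1 + x))
  have ht : t ∈ Ioo (0 : ℝ) 1 := ⟨by positivity, by rw [div_lt_one (by positivity)]; linarith⟩
  have hxt : x * t ∈ Ioo (0 : ℝ) 1 :=
    ⟨by positivity, by rw [← mul_div_assoc, mul_one, div_lt_one (by positivity)]; linarith⟩
  obtain ⟨m, hm, hsand⟩ := exists_index_sandwich (fun n => mul_pos (ha n) ht.1)
    (by simpa using ha0.mul_const t)
  have hden := tendsto_succ_mul_apply_of_sandwich hU (hlim t ht) hm (g := id)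
    (hsand.mono fun _ hh => ⟨hh.1, hh.2.le⟩)
  have hnum := tendsto_succ_mul_apply_of_sandwich hU (s := fun n => a n * (x * t))
    (hlim _ hxt) hm (g := (x * ·)) <| hsand.mono fun h hh => by
      constructor <;> nlinarith [hh.1, hh.2]
  have hlimit : (x * t) ^ α / t ^ α = x ^ α := by
    rw [Real.mul_rpow hx.le ht.1.le, mul_div_assoc, div_self (by positivity), mul_one]
  refine hlimit ▸ (hnum.div hden (by positivity)).congr fun h => ?_
  exact mul_div_mul_left _ _ (by positivity)

lemma tendsto_nhdsGT_zero_of_tendsto_div (hU : Monotone U) {x L : ℝ} (hx : 0 < x)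
    (hlim : Tendsto (fun h => U (x * h) / U h) (𝓝[>] 0) (𝓝 L)) (hL : L ≠ 1) :
    Tendsto U (𝓝[>] 0) (𝓝 0) := by
  have hc := hU.tendsto_nhdsGT 0
  set c := sInf (U '' Ioi 0)
  by_contra hne
  have hc0 : c ≠ 0 := fun h => hne (h ▸ hc)
  have hmul : Tendsto (x * ·) (𝓝[>] (0 : ℝ)) (𝓝[>] 0) := by
    refine tendsto_nhdsWithin_iff.2 ⟨?_, eventually_nhdsWithin_of_forall fun h hh => mul_pos hx hh⟩
    simpa using ((continuous_const_mul x).tendsto 0).mono_left nhdsWithin_le_nhds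
  exact hL (tendsto_nhds_unique hlim (div_self hc0 ▸ (hc.comp hmul).div hc hc0))

end MonotoneTail

noncomputable def tailInv (U : ℝ → ℝ) (y : ℝ) : ℝ := sInf {h | 0 < h ∧ y ≤ U h}

section TailInv

variable {U : ℝ → ℝ} {y : ℝ}

lemma tailInv_le {h : ℝ} (hh : 0 < h) (hy : y ≤ U h) : tailInv U y ≤ h :=
  csInf_le ⟨0, fun _ hk => hk.1.le⟩ ⟨hh, hy⟩

lemma tailInv_pos (hU0 : Tendsto U (𝓝[>] 0) (𝓝 0)) (hy : 0 < y)
    (hne : ∃ h, 0 < h ∧ y ≤ U h) : 0 < tailInv U y := by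
  obtain ⟨δ, hδ, hsmall⟩ := mem_nhdsGT_iff_exists_Ioo_subset.1 (hU0.eventually (gt_mem_nhds hy))
  exact hδ.trans_le <| le_csInf hne fun h ⟨hh, hyh⟩ =>
    le_of_not_gt fun hlt => (hsmall ⟨hh, hlt⟩ : U h < y).not_ge hyh

lemma apply_tailInv_le (hq : 0 < tailInv U y)
    (hlc : ContinuousWithinAt U (Iic (tailInv U y)) (tailInv U y)) : U (tailInv U y) ≤ y := by
  refine le_of_tendsto (hlc.mono Iio_subset_Iic_self) ?_
  filter_upwards [Ioo_mem_nhdsLT hq] with h hh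
  exact le_of_not_ge fun hyh => (tailInv_le hh.1 hyh).not_gt hh.2

lemma le_apply_mul_tailInv (hU : Monotone U) (hne : ∃ h, 0 < h ∧ y ≤ U h)
    (hq : 0 < tailInv U y) {ρ : ℝ} (hρ : 1 < ρ) : y ≤ U (ρ * tailInv U y) := by
  obtain ⟨h, ⟨-, hyh⟩, hlt⟩ := exists_lt_of_csInf_lt hne (lt_mul_of_one_lt_left hq hρ)
  exact hyh.trans (hU hlt.le)

lemma tendsto_tailInv_and_tendsto_apply_tailInv_div (hU : Monotone U)
    (hpos : ∀ h, 0 < h → 0 < U h) (hU0 : Tendsto U (𝓝[>] 0) (𝓝 0))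
    (hlc : ∀ h, 0 < h → ContinuousWithinAt U (Iic h) h) {α : ℝ}
    (hRV : RegularlyVaryingAtZero U α)
    {y : ℕ → ℝ} (hy : ∀ n, 0 < y n) (hy0 : Tendsto y atTop (𝓝 0))
    (hne : ∀ n, ∃ h, 0 < h ∧ y n ≤ U h) :
    Tendsto (fun n => tailInv U (y n)) atTop (𝓝[>] 0) ∧
      Tendsto (fun n => U (tailInv U (y n)) / y n) atTop (𝓝 1) := by
  have hq : ∀ n, 0 < tailInv U (y n) := fun n => tailInv_pos hU0 (hy n) (hne n)
  have hq0 : Tendsto (fun n => tailInv U (y n)) atTop (𝓝[>] 0) := by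
    refine tendsto_nhdsWithin_iff.2 ⟨tendsto_order.2 ⟨fun m hm => Eventually.of_forall
      fun n => hm.trans (hq n), fun ε hε => ?_⟩, Eventually.of_forall hq⟩
    filter_upwards [hy0.eventually (gt_mem_nhds (hpos _ (half_pos hε)))] with n hn
    exact (tailInv_le (half_pos hε) hn.le).trans_lt (half_lt_self hε)
  refine ⟨hq0, tendsto_order.2 ⟨fun m hm => ?_, fun m hm => Eventually.of_forall fun n =>
    ((div_le_one (hy n)).2 (apply_tailInv_le (hq n) (hlc _ (hq n)))).trans_lt hm⟩⟩
  have hinv : ContinuousAt (fun ρ : ℝ => (ρ ^ α)⁻¹) 1 :=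
    (Real.continuousAt_rpow_const 1 α (Or.inl one_ne_zero)).inv₀ (by simp)
  obtain ⟨ρ, hmρ, hρ⟩ := ((hinv.eventually (lt_mem_nhds (by simpa using hm))).filter_mono
    nhdsWithin_le_nhds |>.and (self_mem_nhdsWithin : Ioi (1 : ℝ) ∈ 𝓝[>] 1)).exists
  have hratio : Tendsto (fun n => U (tailInv U (y n)) / U (ρ * tailInv U (y n))) atTop
      (𝓝 (ρ ^ α)⁻¹) := by
    simpa only [Function.comp_def, inv_div] using
      ((hRV ρ (zero_lt_one.trans hρ)).comp hq0).inv₀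
        (Real.rpow_pos_of_pos (zero_lt_one.trans hρ) α).ne'
  filter_upwards [hratio.eventually (lt_mem_nhds hmρ)] with n hn
  exact hn.trans_le (div_le_div_of_nonneg_left (hpos _ (hq n)).le (hy n)
    (le_apply_mul_tailInv hU (hne n) (hq n) hρ))

end TailInv

lemma tendsto_mul_apply_mul_of_tendsto_mul_apply {U : ℝ → ℝ} {α : ℝ}
    (hRV : RegularlyVaryingAtZero U α) (hpos : ∀ h, 0 < h → 0 < U h) {a w : ℕ → ℝ}
    (ha : Tendsto a atTop (𝓝[>] 0)) (h1 : Tendsto (fun n => w n * U (a n)) atTop (𝓝 1))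
    {x : ℝ} (hx : 0 < x) : Tendsto (fun n => w n * U (a n * x)) atTop (𝓝 (x ^ α)) := by
  rw [← one_mul (x ^ α)]
  refine (h1.mul ((hRV x hx).comp ha)).congr' ?_
  filter_upwards [ha.eventually self_mem_nhdsWithin] with n hn
  simp only [Function.comp_apply, mul_comm x]
  field_simp [(hpos _ hn).ne']

lemma exists_tendsto_natCast_mul_apply_mul {U : ℝ → ℝ} (hU : Monotone U)
    (hpos : ∀ h, 0 < h → 0 < U h) (hlc : ∀ h, 0 < h → ContinuousWithinAt U (Iic h) h)
    (hU1 : Tendsto U atTop (𝓝 1)) {α : ℝ} (hα : α ≠ 0) (hRV : RegularlyVaryingAtZero U α) :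
    ∃ a : ℕ → ℝ, (∀ n, 0 < a n) ∧
      ∀ x, 0 < x → Tendsto (fun n : ℕ => (n : ℝ) * U (a n * x)) atTop (𝓝 (x ^ α)) := by
  have hU0 : Tendsto U (𝓝[>] 0) (𝓝 0) := tendsto_nhdsGT_zero_of_tendsto_div hU two_pos
    (hRV 2 two_pos) fun h => hα ((Real.rpow_right_inj two_pos (by norm_num)).1
      (h.trans (Real.rpow_zero 2).symm))
  -- levels `(n + 2)⁻¹ < 1` rather than `n⁻¹`, so that every level is attained and `a n > 0`
  set y : ℕ → ℝ := fun n => ((n : ℝ) + 2)⁻¹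
  have hne : ∀ n, ∃ h, 0 < h ∧ y n ≤ U h := fun n =>
    ((hU1.eventually (lt_mem_nhds (inv_lt_one_of_one_lt₀
      (by linarith [n.cast_nonneg (α := ℝ)])))).and (eventually_gt_atTop 0)).exists.imp
      fun _ hh => ⟨hh.2, hh.1.le⟩
  obtain ⟨ha0, ha1⟩ := tendsto_tailInv_and_tendsto_apply_tailInv_div hU hpos hU0 hlc hRV
    (y := y) (fun n => by positivity)
    (tendsto_inv_atTop_zero.comp (tendsto_atTop_add_const_right _ 2 tendsto_natCast_atTop_atTop))
    hne
  have h1 : Tendsto (fun n : ℕ => (n : ℝ) * U (tailInv U (y n))) atTop (𝓝 1) := by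
    rw [← one_mul 1]
    refine ((tendsto_natCast_div_add_atTop (2 : ℝ)).mul ha1).congr fun n => ?_
    simp only [y]
    field_simp
  exact ⟨fun n => tailInv U (y n), fun n => tailInv_pos hU0 (by positivity) (hne n),
    fun x hx => tendsto_mul_apply_mul_of_tendsto_mul_apply hRV hpos ha0 h1 hx⟩

noncomputable def rightEndpoint (F : ℝ → ℝ) : ℝ := sSup {y | F y < 1}

noncomputable def endpointTail (F : ℝ → ℝ) (h : ℝ) : ℝ := 1 - F (rightEndpoint F - h)

lemma freePow_eq_max (F : ℝ → ℝ) (n : ℕ) (y : ℝ) : freePow F n y = max (1 - n * (1 - F y)) 0 := by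
  rw [freePow]; ring_nf

lemma betaDF_of_nonpos {α x : ℝ} (hα : 0 < α) (hx : x ≤ 0) :
    betaDF α x = max (1 - (-x) ^ α) 0 := by
  rw [betaDF]
  split_ifs with h₁
  · have : 1 ≤ (-x) ^ α := Real.one_le_rpow (by linarith) hα.le
    rw [max_eq_right (by linarith)]
  · have : (-x) ^ α ≤ 1 := Real.rpow_le_one (by linarith) (by linarith) hα.le
    rw [abs_of_nonpos hx, max_eq_left (by linarith)]

lemma betaDF_of_nonneg {α x : ℝ} (hα : 0 < α) (hx : 0 ≤ x) : betaDF α x = 1 := by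
  rcases hx.lt_or_eq with hx | rfl
  · rw [betaDF, if_neg (by linarith), if_neg (by linarith)]
  · simp [betaDF, Real.zero_rpow hα.ne']

lemma endpointTail_mono {F : ℝ → ℝ} (hF : Monotone F) : Monotone (endpointTail F) :=
  fun _ _ hle => sub_le_sub_left (hF (sub_le_sub_left hle _)) 1

lemma isLUB_setOf_lt_one {F : ℝ → ℝ} (hF : Monotone F) {x y : ℕ → ℝ} {L : ℝ}
    (hx : Tendsto x atTop (𝓝 L)) (hFx : Tendsto (fun k => F (x k)) atTop (𝓝 1))
    (hy : Tendsto y atTop (𝓝 L)) (hFy : ∀ᶠ k in atTop, F (y k) < 1) :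
    IsLUB {z | F z < 1} L := by
  refine ⟨fun z hz => le_of_not_gt fun hLz => ?_, fun u hu => le_of_tendsto hy ?_⟩
  · exact (hz : F z < 1).not_ge <|
      le_of_tendsto hFx ((hx.eventually (gt_mem_nhds hLz)).mono fun _ hk => hF hk.le)
  · exact hFy.mono fun _ hk => hu hk

namespace IsDistFun

variable {F : ℝ → ℝ}

lemma le_one (hF : IsDistFun F) (y : ℝ) : F y ≤ 1 :=
  ge_of_tendsto hF.2.2.2 ((eventually_ge_atTop y).mono fun _ hz => hF.1 hz)

lemma nonempty_setOf_lt_one (hF : IsDistFun F) : {y | F y < 1}.Nonempty :=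
  (hF.2.2.1.eventually (gt_mem_nhds one_pos)).exists

lemma apply_eq_one (hF : IsDistFun F) (hB : BddAbove {y | F y < 1}) {y : ℝ}
    (hy : rightEndpoint F ≤ y) : F y = 1 := by
  have hgt : ∀ z, rightEndpoint F < z → F z = 1 := fun z hz =>
    le_antisymm (hF.le_one z) (not_lt.1 fun h => hz.not_ge (le_csSup hB h))
  rcases hy.lt_or_eq with hy | rfl
  · exact hgt y hy
  · exact le_antisymm (hF.le_one _) <| ge_of_tendsto ((hF.2.1 _).mono Ioi_subset_Ici_self)
      (eventually_nhdsWithin_of_forall fun z hz => (hgt z hz).ge)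

lemma endpointTail_pos (hF : IsDistFun F) {h : ℝ} (hh : 0 < h) : 0 < endpointTail F h := by
  obtain ⟨z, hz, hlt⟩ := exists_lt_of_lt_csSup hF.nonempty_setOf_lt_one (sub_lt_self _ hh)
  exact sub_pos.2 ((hF.1 hlt.le).trans_lt hz)

lemma continuousWithinAt_endpointTail (hF : IsDistFun F) (h : ℝ) :
    ContinuousWithinAt (endpointTail F) (Iic h) h :=
  ((hF.2.1 _).comp (continuous_sub_left _).continuousWithinAt
    fun _ hk => sub_le_sub_left (mem_Iic.1 hk) _).const_sub 1

lemma tendsto_endpointTail_atTop (hF : IsDistFun F) : Tendsto (endpointTail F) atTop (𝓝 1) := by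
  have hlim := (hF.2.2.1.comp (tendsto_atBot_add_const_left atTop (rightEndpoint F)
    tendsto_neg_atTop_atBot)).const_sub 1
  rw [sub_zero] at hlim
  exact hlim.congr fun h => by simp [endpointTail, sub_eq_add_neg]

end IsDistFun

section Necessity

variable {F : ℝ → ℝ} {a b : ℕ → ℝ} {α : ℝ}

lemma exists_isLUB_of_doubling (hF : Monotone F) (ha : ∀ n, 0 < a n)
    (hFb : Tendsto (fun n => F (b n)) atTop (𝓝 1)) {t : ℝ}
    (hmid : ∀ᶠ n in atTop, F (b n - a n * t) < 1) {κ ε : ℝ} (hκ0 : 0 ≤ κ) (hκ1 : κ < 1)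
    (hε : 0 ≤ ε) {N : ℕ}
    (hstep : ∀ n, N ≤ n → a (2 * n) ≤ κ * a n ∧ |b (2 * n) - b n| ≤ ε * a n)
    {n : ℕ} (hN : N ≤ n) (hn : 0 < n) :
    ∃ L, IsLUB {z | F z < 1} L ∧ |b n - L| ≤ ε * a n / (1 - κ) := by
  have hsub : Tendsto (fun k : ℕ => 2 ^ k * n) atTop atTop :=
    tendsto_atTop_mono (fun k => Nat.lt_two_pow_self.le.trans (Nat.le_mul_of_pos_right _ hn))
      tendsto_id
  have hstep' : ∀ k, a (2 ^ (k + 1) * n) ≤ κ * a (2 ^ k * n) ∧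
      |b (2 ^ (k + 1) * n) - b (2 ^ k * n)| ≤ ε * a (2 ^ k * n) := fun k => by
    simpa only [pow_succ', mul_assoc] using
      hstep _ (hN.trans (Nat.le_mul_of_pos_left n (by positivity)))
  obtain ⟨hA, L, hL, hbL⟩ := exists_tendsto_of_abs_sub_le_geometric
    (A := fun k => a (2 ^ k * n)) (B := fun k => b (2 ^ k * n)) (fun k => (ha _).le) hκ0 hκ1 hε
    hstep'
  refine ⟨L, isLUB_setOf_lt_one hF hL (hFb.comp hsub) ?_ (hsub.eventually hmid), by simpa using hbL⟩
  simpa using hL.sub (hA.mul_const t)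

lemma bddAbove_and_tendsto_div_of_doubling (hF : Monotone F) (ha : ∀ n, 0 < a n)
    (hFb : Tendsto (fun n => F (b n)) atTop (𝓝 1)) {t : ℝ}
    (hmid : ∀ᶠ n in atTop, F (b n - a n * t) < 1) {c : ℝ} (hc : c < 1)
    (ha2 : Tendsto (fun n => a (2 * n) / a n) atTop (𝓝 c))
    (hb2 : Tendsto (fun n => (b (2 * n) - b n) / a n) atTop (𝓝 0)) :
    BddAbove {z | F z < 1} ∧ Tendsto (fun n => (rightEndpoint F - b n) / a n) atTop (𝓝 0) := by
  obtain ⟨κ, hcκ, hκ1⟩ := exists_between hc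
  have hκ0 : 0 ≤ κ := (ge_of_tendsto' ha2 fun n => (div_pos (ha _) (ha _)).le).trans hcκ.le
  have key : ∀ ε > 0, ∀ᶠ n in atTop,
      ∃ L, IsLUB {z | F z < 1} L ∧ |b n - L| ≤ ε * a n / (1 - κ) := by
    intro ε hε
    obtain ⟨N, hN⟩ := eventually_atTop.1 ((ha2.eventually (gt_mem_nhds hcκ)).and
      (hb2.eventually (Metric.ball_mem_nhds 0 hε)))
    filter_upwards [eventually_gt_atTop N] with n hn
    refine exists_isLUB_of_doubling hF ha hFb hmid hκ0 hκ1 hε.le (fun m hm => ?_) hn.le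
      (by omega)
    obtain ⟨h₁, h₂⟩ := hN m hm
    rw [div_lt_iff₀ (ha m)] at h₁
    rw [Real.dist_eq, sub_zero, abs_div, abs_of_pos (ha m), div_lt_iff₀ (ha m)] at h₂
    exact ⟨h₁.le, h₂.le⟩
  obtain ⟨n, hn⟩ := hmid.exists
  obtain ⟨-, L, hL, -⟩ := (key 1 one_pos).exists
  refine ⟨hL.bddAbove, Metric.tendsto_nhds.2 fun ε hε => ?_⟩
  filter_upwards [key (ε * (1 - κ) / 2) (by nlinarith)] with n ⟨L', hL', hbL⟩
  rw [rightEndpoint, hL'.csSup_eq ⟨_, hn⟩, Real.dist_eq, sub_zero, abs_div, abs_of_pos (ha n),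
    abs_sub_comm, div_lt_iff₀ (ha n)]
  calc |b n - L'| ≤ ε * (1 - κ) / 2 * a n / (1 - κ) := hbL
    _ = ε / 2 * a n := by field_simp [(sub_pos.2 hκ1).ne']
    _ < ε * a n := by nlinarith [ha n]

lemma tendsto_mul_one_sub_of_tendsto_freePow (hα : 0 < α)
    (hconv : ∀ x, Tendsto (fun n => freePow F n (a n * x + b n)) atTop (𝓝 (betaDF α x)))
    {t : ℝ} (ht : t ∈ Ico (0 : ℝ) 1) :
    Tendsto (fun n : ℕ => (n : ℝ) * (1 - F (b n - a n * t))) atTop (𝓝 (t ^ α)) := by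
  have htα : t ^ α < 1 := Real.rpow_lt_one ht.1 ht.2 hα
  have hlim := hconv (-t)
  rw [betaDF_of_nonpos hα (by linarith [ht.1]), neg_neg, max_eq_left (by linarith)] at hlim
  rw [← sub_sub_cancel 1 (t ^ α)]
  refine (tendsto_const_nhds.sub hlim).congr' ?_
  filter_upwards [hlim.eventually (lt_mem_nhds (sub_pos.2 htα))] with n hn
  rw [freePow_eq_max] at hn ⊢
  rw [max_eq_left ((lt_max_iff.1 hn).resolve_right (lt_irrefl 0)).le, mul_neg, neg_add_eq_sub]
  ring

lemma tendsto_doubling_of_tendsto_mul_one_sub (hF : Monotone F) (ha : ∀ n, 0 < a n)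
    (hα : 0 < α)
    (hT : ∀ t ∈ Ico (0 : ℝ) 1,
      Tendsto (fun n : ℕ => (n : ℝ) * (1 - F (b n - a n * t))) atTop (𝓝 (t ^ α))) :
    Tendsto (fun n => a (2 * n) / a n) atTop (𝓝 ((1 / 2) ^ α⁻¹)) ∧
      Tendsto (fun n => (b (2 * n) - b n) / a n) atTop (𝓝 0) := by
  set c : ℝ := (1 / 2) ^ α⁻¹
  have hcα : c ^ α = 1 / 2 := Real.rpow_inv_rpow (by norm_num) hα.ne'
  refine tendsto_div_and_tendsto_sub_div_of_tendsto_apply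
    (u := fun (n : ℕ) y => (n : ℝ) * (1 - F y))
    (fun n _ _ hyz => mul_le_mul_of_nonneg_left (sub_le_sub_left (hF hyz) 1) n.cast_nonneg)
    ((Real.strictMonoOn_rpow_Ici_of_exponent_pos hα).mono Ico_subset_Ici_self) ha hT
    (by positivity) (Real.rpow_le_one (by norm_num) (by norm_num) (by positivity)) fun t ht => ?_
  have hdouble : Tendsto (fun n : ℕ => 2 * n) atTop atTop :=
    tendsto_atTop_mono (fun n => Nat.le_mul_of_pos_left n two_pos) tendsto_id
  rw [Real.mul_rpow (by positivity) ht.1, hcα]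
  refine (((hT t ht).comp hdouble).const_mul (1 / 2)).congr fun n => ?_
  simp only [Function.comp_apply, Nat.cast_mul, Nat.cast_ofNat]
  ring

lemma bddAbove_and_regularlyVarying_of_tendsto_freePow (hF : IsDistFun F) (hα : 0 < α)
    (ha : ∀ n, 0 < a n)
    (hconv : ∀ x, Tendsto (fun n => freePow F n (a n * x + b n)) atTop (𝓝 (betaDF α x))) :
    BddAbove {y | F y < 1} ∧ RegularlyVaryingAtZero (endpointTail F) α := by
  have hT := fun t (ht : t ∈ Ico (0 : ℝ) 1) => tendsto_mul_one_sub_of_tendsto_freePow hα hconv ht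
  have hFb : Tendsto (fun n => F (b n)) atTop (𝓝 1) := by
    have := (tendsto_zero_of_tendsto_natCast_mul (hT 0 ⟨le_rfl, one_pos⟩)).const_sub 1
    simpa using this
  have hmid : ∀ᶠ n in atTop, F (b n - a n * (1 / 2)) < 1 := by
    filter_upwards [(hT _ ⟨by norm_num, by norm_num⟩).eventually
      (lt_mem_nhds (by positivity : (0 : ℝ) < (1 / 2) ^ α)), eventually_gt_atTop 0] with n hn hn0
    exact sub_pos.1 (pos_of_mul_pos_right hn (by positivity))
  obtain ⟨ha2, hb2⟩ := tendsto_doubling_of_tendsto_mul_one_sub hF.1 ha hα hT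
  obtain ⟨hB, hd⟩ := bddAbove_and_tendsto_div_of_doubling hF.1 ha hFb hmid
    (Real.rpow_lt_one (by norm_num) (by norm_num) (by positivity)) ha2 hb2
  have hU := endpointTail_mono hF.1
  have hlim : ∀ t ∈ Ioo (0 : ℝ) 1,
      Tendsto (fun n : ℕ => (n : ℝ) * endpointTail F (a n * t)) atTop (𝓝 (t ^ α)) :=
    fun t ht => tendsto_mul_apply_of_tendsto_mul_apply_add hU ha hd
      (fun s hs => (hT s hs).congr fun n => by simp only [endpointTail]; ring_nf) ht
      (Real.continuousAt_rpow_const _ _ (Or.inr hα.le))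
  have ha0 : Tendsto a atTop (𝓝 0) := by
    have := tendsto_zero_of_tendsto_apply_zero hU (fun _ => hF.endpointTail_pos)
      (fun n => (mul_pos (ha n) one_half_pos).le)
      (tendsto_zero_of_tendsto_natCast_mul (hlim (1 / 2) ⟨by norm_num, by norm_num⟩))
    simpa using this.mul_const 2
  exact ⟨hB, regularlyVaryingAtZero_of_tendsto_mul_apply hU ha ha0 hlim⟩

end Necessity

lemma exists_tendsto_freePow_of_regularlyVarying {F : ℝ → ℝ} (hF : IsDistFun F) {α : ℝ}
    (hα : 0 < α) (hB : BddAbove {y | F y < 1})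
    (hRV : RegularlyVaryingAtZero (endpointTail F) α) :
    ∃ a b : ℕ → ℝ, (∀ n, 0 < a n) ∧
      ∀ x, Tendsto (fun n => freePow F n (a n * x + b n)) atTop (𝓝 (betaDF α x)) := by
  obtain ⟨a, ha, hlim⟩ := exists_tendsto_natCast_mul_apply_mul (endpointTail_mono hF.1)
    (fun _ => hF.endpointTail_pos) (fun h _ => hF.continuousWithinAt_endpointTail h)
    hF.tendsto_endpointTail_atTop hα.ne' hRV
  refine ⟨a, fun _ => rightEndpoint F, ha, fun x => ?_⟩
  rcases lt_or_ge x 0 with hx | hx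
  · rw [betaDF_of_nonpos hα hx.le]
    have hcont : Continuous fun s : ℝ => max (1 - s) 0 :=
      (continuous_const.sub continuous_id).max continuous_const
    refine ((hcont.tendsto _).comp (hlim (-x) (neg_pos.2 hx))).congr fun n => ?_
    simp only [Function.comp_apply, freePow_eq_max, endpointTail]
    ring_nf
  · rw [betaDF_of_nonneg hα hx]
    refine tendsto_const_nhds.congr fun n => ?_
    have hω : rightEndpoint F ≤ a n * x + rightEndpoint F :=
      le_add_of_nonneg_left (mul_nonneg (ha n).le hx)
    rw [freePow_eq_max, hF.apply_eq_one hB hω, sub_self, mul_zero, sub_zero,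
      max_eq_left zero_le_one]

/-- `F` is in the free max-domain of attraction of the Beta law `B_α` iff
`ω(F) = sup {x | F x < 1}` is finite and `h ↦ 1 - F (ω(F) - h)` is regularly
varying at `0` of exponent `α`. -/
theorem freeDomAttr_beta_iff_regularlyVarying
    (F : ℝ → ℝ) (hF : IsDistFun F) (α : ℝ) (hα : 0 < α) :
    (∃ a b : ℕ → ℝ, (∀ n, 0 < a n) ∧
        ∀ x : ℝ, Tendsto (fun n => freePow F n (a n * x + b n)) atTop
          (𝓝 (betaDF α x))) ↔
      (BddAbove {y : ℝ | F y < 1} ∧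
        ∀ x : ℝ, 0 < x →
          Tendsto (fun h => (1 - F (sSup {y : ℝ | F y < 1} - x * h)) /
              (1 - F (sSup {y : ℝ | F y < 1} - h)))
            (𝓝[>] (0 : ℝ)) (𝓝 (x ^ α))) := by
  constructor
  · rintro ⟨a, b, ha, hconv⟩
    exact bddAbove_and_regularlyVarying_of_tendsto_freePow hF hα ha hconv
  · rintro ⟨hB, hRV⟩
    exact exists_tendsto_freePow_of_regularlyVarying hF hα hB hRV
end
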